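/- Let (X, ‖·‖) be a quasi-Banach space and U : X → X a mapping such that for some positive integer N, the iterate U^N is a (b,θ)-enriched contraction. Then U has a unique fixed point, i.e., Fix(U) = {p}, where p is the unique fixed point of U^N. -/

import Mathlib

/-!
Averaging `U^N` with the identity, `T x = (b + 1)⁻¹ • (b • x + U^[N] x)`, turns the enriched
contraction into a genuine contraction with constant `θ / (b + 1) < 1`, and `T` has the same fixed
points as `U^[N]`. In a quasi-metric space the Picard iterates of a contraction are only known to be
Cauchy when the constant `q` satisfies `K q < 1`; this is arranged by replacing `T` with a high
enough iterate. A unique fixed point of an iterate of a map is a fixed point of the map itself,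
since the map sends fixed points of its iterates to fixed points of the same iterate.
-/

open Filter Topology Function

theorem Function.IsFixedPt.of_iterate_of_unique {α : Type*} {f : α → α} {n : ℕ} {p : α}
    (hp : IsFixedPt f^[n] p) (huniq : ∀ q, IsFixedPt f^[n] q → q = p) : IsFixedPt f p :=
  huniq _ (hp.map (Commute.self_iterate f n))

theorem dist_iterate_le_of_contraction {α : Type*} {d : α → α → ℝ} {f : α → α} {k : ℝ}
    (hk : 0 ≤ k) (hf : ∀ x y, d (f x) (f y) ≤ k * d x y) (n : ℕ) (x y : α) :
    d (f^[n] x) (f^[n] y) ≤ k ^ n * d x y := by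
  induction n with
  | zero => simp
  | succ n ih =>
    rw [iterate_succ_apply', iterate_succ_apply', pow_succ', mul_assoc]
    exact (hf _ _).trans (mul_le_mul_of_nonneg_left ih hk)

structure IsQuasiMetric {α : Type*} (d : α → α → ℝ) (K : ℝ) : Prop where
  one_le : 1 ≤ K
  nonneg : ∀ x y, 0 ≤ d x y
  eq_zero_iff : ∀ x y, d x y = 0 ↔ x = y
  symm : ∀ x y, d x y = d y x
  triangle : ∀ x y z, d x z ≤ K * (d x y + d y z)

def QuasiMetricComplete {α : Type*} (d : α → α → ℝ) : Prop :=
  ∀ u : ℕ → α, (∀ ε > 0, ∃ N : ℕ, ∀ m ≥ N, ∀ n ≥ N, d (u m) (u n) < ε) →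
    ∃ l, Tendsto (fun n => d (u n) l) atTop (𝓝 0)

namespace IsQuasiMetric

variable {α : Type*} {d : α → α → ℝ} {K : ℝ}

theorem eq_of_le_mul (hd : IsQuasiMetric d K) {x y : α} {k : ℝ} (hk : k < 1)
    (h : d x y ≤ k * d x y) : x = y := by
  have hxy := hd.nonneg x y
  exact (hd.eq_zero_iff x y).1 (by nlinarith)

theorem eq_of_isFixedPt_of_contraction (hd : IsQuasiMetric d K) {f : α → α} {k : ℝ} (hk : k < 1)
    (hf : ∀ x y, d (f x) (f y) ≤ k * d x y) {x y : α} (hx : IsFixedPt f x)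
    (hy : IsFixedPt f y) : x = y :=
  hd.eq_of_le_mul hk (by simpa only [hx.eq, hy.eq] using hf x y)

theorem dist_add_le_of_dist_succ_le (hd : IsQuasiMetric d K) {u : ℕ → α} {a q : ℝ}
    (hq0 : 0 ≤ q) (hq : K * q < 1) (hu : ∀ n, d (u (n + 1)) (u n) ≤ a * q ^ n) (j n : ℕ) :
    d (u (n + j)) (u n) ≤ K * a / (1 - K * q) * q ^ n := by
  have hpos : 0 < 1 - K * q := by linarith
  have hK : 0 ≤ K := zero_le_one.trans hd.one_le
  induction j generalizing n with
  | zero =>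
    have ha : 0 ≤ a := by simpa using (hd.nonneg _ _).trans (hu 0)
    rw [add_zero, (hd.eq_zero_iff _ _).2 rfl]
    positivity
  | succ j ih =>
    set B := K * a / (1 - K * q)
    -- `B` is the fixed point of `B ↦ K (q B + a)`, so the bound propagates in `j`.
    have hB : K * (q * B + a) = B := by
      simp only [B]; field_simp; ring
    calc d (u (n + (j + 1))) (u n)
        ≤ K * (d (u (n + 1 + j)) (u (n + 1)) + d (u (n + 1)) (u n)) := by
          rw [Nat.add_right_comm, ← Nat.add_assoc]
          exact hd.triangle _ _ _
      _ ≤ K * (B * q ^ (n + 1) + a * q ^ n) := by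
          gcongr
          exacts [ih (n + 1), hu n]
      _ = K * (q * B + a) * q ^ n := by ring
      _ = B * q ^ n := by rw [hB]

theorem cauchy_of_dist_succ_le (hd : IsQuasiMetric d K) {u : ℕ → α} {a q : ℝ}
    (hq0 : 0 ≤ q) (hq : K * q < 1) (hu : ∀ n, d (u (n + 1)) (u n) ≤ a * q ^ n) :
    ∀ ε > 0, ∃ N : ℕ, ∀ m ≥ N, ∀ n ≥ N, d (u m) (u n) < ε := by
  have hq1 : q < 1 := by nlinarith [hd.one_le]
  have hlim : Tendsto (fun n => K * a / (1 - K * q) * q ^ n) atTop (𝓝 0) := by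
    simpa using (tendsto_pow_atTop_nhds_zero_of_lt_one hq0 hq1).const_mul (K * a / (1 - K * q))
  intro ε hε
  obtain ⟨N, hN⟩ := eventually_atTop.1 (hlim.eventually (gt_mem_nhds hε))
  refine ⟨N, fun m hm n hn => ?_⟩
  rcases le_total n m with hnm | hmn
  · obtain ⟨j, rfl⟩ := Nat.exists_eq_add_of_le hnm
    exact (hd.dist_add_le_of_dist_succ_le hq0 hq hu j n).trans_lt (hN n hn)
  · obtain ⟨j, rfl⟩ := Nat.exists_eq_add_of_le hmn
    rw [hd.symm]
    exact (hd.dist_add_le_of_dist_succ_le hq0 hq hu j m).trans_lt (hN m hm)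

theorem isFixedPt_of_tendsto_iterate (hd : IsQuasiMetric d K) {f : α → α} {k : ℝ}
    (hf : ∀ x y, d (f x) (f y) ≤ k * d x y) {x l : α}
    (hl : Tendsto (fun n => d (f^[n] x) l) atTop (𝓝 0)) : IsFixedPt f l := by
  have hK : 0 ≤ K := zero_le_one.trans hd.one_le
  have hbound : ∀ n, d (f l) l ≤ K * (k * d (f^[n] x) l + d (f^[n + 1] x) l) := fun n => by
    calc d (f l) l ≤ K * (d (f l) (f (f^[n] x)) + d (f (f^[n] x)) l) := hd.triangle _ _ _
      _ ≤ K * (k * d (f^[n] x) l + d (f^[n + 1] x) l) := by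
          rw [iterate_succ_apply', hd.symm (f^[n] x)]
          gcongr
          exact hf _ _
  have hlim : Tendsto (fun n => K * (k * d (f^[n] x) l + d (f^[n + 1] x) l)) atTop (𝓝 0) := by
    simpa using ((hl.const_mul k).add (hl.comp (tendsto_add_atTop_nat 1))).const_mul K
  exact (hd.eq_zero_iff _ _).1 (le_antisymm (ge_of_tendsto' hlim hbound) (hd.nonneg _ _))

theorem exists_isFixedPt_of_mul_lt_one (hd : IsQuasiMetric d K) (hc : QuasiMetricComplete d)
    [Nonempty α] {f : α → α} {q : ℝ} (hq0 : 0 ≤ q) (hq : K * q < 1)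
    (hf : ∀ x y, d (f x) (f y) ≤ q * d x y) : ∃ p, IsFixedPt f p := by
  obtain ⟨x⟩ := ‹Nonempty α›
  have hstep : ∀ n, d (f^[n + 1] x) (f^[n] x) ≤ d (f x) x * q ^ n := fun n => by
    rw [iterate_succ_apply, mul_comm]
    exact dist_iterate_le_of_contraction hq0 hf n (f x) x
  obtain ⟨p, hp⟩ := hc (fun n => f^[n] x) (hd.cauchy_of_dist_succ_le hq0 hq hstep)
  exact ⟨p, hd.isFixedPt_of_tendsto_iterate hf hp⟩

theorem existsUnique_isFixedPt_of_contraction (hd : IsQuasiMetric d K)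
    (hc : QuasiMetricComplete d) [Nonempty α] {f : α → α} {k : ℝ} (hk0 : 0 ≤ k) (hk : k < 1)
    (hf : ∀ x y, d (f x) (f y) ≤ k * d x y) : ∃! p, IsFixedPt f p := by
  have hK : 0 < K := zero_lt_one.trans_le hd.one_le
  obtain ⟨M, hM⟩ := exists_pow_lt_of_lt_one (inv_pos.2 hK) hk
  have hKM : K * k ^ M < 1 := by
    simpa [hK.ne'] using mul_lt_mul_of_pos_left hM hK
  have hM1 : k ^ M < 1 := by nlinarith [hd.one_le, pow_nonneg hk0 M]
  have hfM := dist_iterate_le_of_contraction hk0 hf M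
  obtain ⟨p, hp⟩ := hd.exists_isFixedPt_of_mul_lt_one hc (pow_nonneg hk0 M) hKM hfM
  refine ⟨p, hp.of_iterate_of_unique fun q hq => ?_, fun q hq => ?_⟩
  · exact hd.eq_of_isFixedPt_of_contraction hM1 hfM hq hp
  · exact hd.eq_of_isFixedPt_of_contraction hM1 hfM (hq.iterate M) hp

end IsQuasiMetric

section QuasiNorm

variable {X : Type*} [AddCommGroup X] [Module ℝ X]

structure IsQuasiNorm (Nm : X → ℝ) (C : ℝ) : Prop where
  one_le : 1 ≤ C
  nonneg : ∀ x, 0 ≤ Nm x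
  eq_zero_iff : ∀ x, Nm x = 0 ↔ x = 0
  smul : ∀ (r : ℝ) x, Nm (r • x) = |r| * Nm x
  add_le : ∀ x y, Nm (x + y) ≤ C * (Nm x + Nm y)

theorem IsQuasiNorm.isQuasiMetric {Nm : X → ℝ} {C : ℝ} (h : IsQuasiNorm Nm C) :
    IsQuasiMetric (fun x y => Nm (x - y)) C where
  one_le := h.one_le
  nonneg _ _ := h.nonneg _
  eq_zero_iff _ _ := (h.eq_zero_iff _).trans sub_eq_zero
  symm x y := by rw [← neg_sub, ← neg_one_smul ℝ, h.smul, abs_neg, abs_one, one_mul]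
  triangle x y z := by simpa using h.add_le (x - y) (y - z)

/-- The Krasnoselskij map `(1 - λ) x + λ S x` with `λ = 1 / (b + 1)`. -/
noncomputable def averagedMap (b : ℝ) (S : X → X) (x : X) : X :=
  (b + 1)⁻¹ • (b • x + S x)

theorem isFixedPt_averagedMap_iff {b : ℝ} {S : X → X} (hb : b + 1 ≠ 0) {x : X} :
    IsFixedPt (averagedMap b S) x ↔ IsFixedPt S x := by
  rw [IsFixedPt, averagedMap, inv_smul_eq_iff₀ hb, add_smul, one_smul, add_right_inj]
  rfl

theorem averagedMap_sub_le {Nm : X → ℝ} (hsmul : ∀ (r : ℝ) x, Nm (r • x) = |r| * Nm x)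
    {b θ : ℝ} (hb : 0 < b + 1) {S : X → X}
    (hS : ∀ x y, Nm (b • (x - y) + (S x - S y)) ≤ θ * Nm (x - y)) (x y : X) :
    Nm (averagedMap b S x - averagedMap b S y) ≤ θ / (b + 1) * Nm (x - y) := by
  have hsub : averagedMap b S x - averagedMap b S y =
      (b + 1)⁻¹ • (b • (x - y) + (S x - S y)) := by
    simp only [averagedMap]
    module
  rw [hsub, hsmul, abs_of_pos (inv_pos.2 hb), div_eq_inv_mul, mul_assoc]
  exact mul_le_mul_of_nonneg_left (hS x y) (inv_nonneg.2 hb.le)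

end QuasiNorm

theorem stmt_9_general {X : Type*} [AddCommGroup X] [Module ℝ X] (Nm : X → ℝ) (C : ℝ)
    (hC : 1 ≤ C)
    (hnn : ∀ x, 0 ≤ Nm x)
    (h0 : ∀ x, Nm x = 0 ↔ x = 0)
    (h1 : ∀ (r : ℝ) (x : X), Nm (r • x) = |r| * Nm x)
    (h2 : ∀ x y, Nm (x + y) ≤ C * (Nm x + Nm y))
    (hcomplete : ∀ u : ℕ → X,
      (∀ ε > 0, ∃ N : ℕ, ∀ m ≥ N, ∀ n ≥ N, Nm (u m - u n) < ε) →
      ∃ l : X, Filter.Tendsto (fun n => Nm (u n - l)) Filter.atTop (nhds 0))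
    (U : X → X) (N : ℕ)
    (b θ : ℝ) (hθ0 : 0 ≤ θ) (hθ : θ < b + 1)
    (hU : ∀ x y, Nm (b • (x - y) + (U^[N] x - U^[N] y)) ≤ θ * Nm (x - y)) :
    ∃ p : X, U^[N] p = p ∧ (∀ q, U^[N] q = q → q = p) ∧
      U p = p ∧ (∀ q, U q = q → q = p) := by
  have hQ : IsQuasiNorm Nm C := ⟨hC, hnn, h0, h1, h2⟩
  have hb : 0 < b + 1 := hθ0.trans_lt hθ
  have hfix (x : X) : IsFixedPt (averagedMap b U^[N]) x ↔ IsFixedPt U^[N] x :=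
    isFixedPt_averagedMap_iff hb.ne'
  obtain ⟨p, hp, huniq⟩ := hQ.isQuasiMetric.existsUnique_isFixedPt_of_contraction hcomplete
    (div_nonneg hθ0 hb.le) ((div_lt_one hb).2 hθ) (averagedMap_sub_le h1 hb hU)
  have hUNp : IsFixedPt U^[N] p := (hfix p).1 hp
  have hUNuniq (q : X) (hq : IsFixedPt U^[N] q) : q = p := huniq q ((hfix q).2 hq)
  exact ⟨p, hUNp, hUNuniq, hUNp.of_iterate_of_unique hUNuniq,
    fun q hq => hUNuniq q (iterate_fixed hq N)⟩

/-- if some iterate U^N of U is a (b,θ)-enriched contraction on a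
quasi-Banach space, then U has a unique fixed point p, which is also the unique
fixed point of U^N. -/
theorem stmt_9 {X : Type*} [AddCommGroup X] [Module ℝ X] (Nm : X → ℝ) (C : ℝ)
    (hC : 1 ≤ C)
    (hnn : ∀ x, 0 ≤ Nm x)
    (h0 : ∀ x, Nm x = 0 ↔ x = 0)
    (h1 : ∀ (r : ℝ) (x : X), Nm (r • x) = |r| * Nm x)
    (h2 : ∀ x y, Nm (x + y) ≤ C * (Nm x + Nm y))
    (hcomplete : ∀ u : ℕ → X,
      (∀ ε > 0, ∃ N : ℕ, ∀ m ≥ N, ∀ n ≥ N, Nm (u m - u n) < ε) →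
      ∃ l : X, Filter.Tendsto (fun n => Nm (u n - l)) Filter.atTop (nhds 0))
    (U : X → X) (N : ℕ) (hN : 0 < N)
    (b θ : ℝ) (hb : 0 ≤ b) (hθ0 : 0 ≤ θ) (hθ : θ < b + 1)
    (hU : ∀ x y, Nm (b • (x - y) + (U^[N] x - U^[N] y)) ≤ θ * Nm (x - y)) :
    ∃ p : X, U^[N] p = p ∧ (∀ q, U^[N] q = q → q = p) ∧
      U p = p ∧ (∀ q, U q = q → q = p) :=
  stmt_9_general Nm C hC hnn h0 h1 h2 hcomplete U N b θ hθ0 hθ hU
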